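/- arXiv:2601.10249 — 2 statements merged into one kernel-verified Lean document; each statement's English description precedes it below -/
import Mathlib

section
/- Explicit tail integral of H_r (Claim 'Explicit formulas for H_r and I_r', equation for I_r): Fix an integer Δ ≥ 3 and let r ∈ R_Δ. For every t ≥ 0 the improper integral ∫_t^∞ H_r(s) ds converges and equals I_r(t) := e^{−λ(t)} · ( −Λ_r(t) + Σ_{k=1}^{Δ−2} (λ(t)^k/k!) · s_{k+2} ). In particular ∫_0^∞ H_r(s) ds = 0. -/
open Real MeasureTheory Filter

noncomputable section

/-- Tail sums: `s_k = Σ_{d=k}^Δ r_d` (also used as `q_k` for distributions `p`). -/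
def tailS (Δ : ℕ) (r : ℕ → ℝ) (k : ℕ) : ℝ := ∑ d ∈ Finset.Icc k Δ, r d

/-- Membership in the set `R_Δ`: `r_2 = -1`, `r_k ≥ 0` for `3 ≤ k ≤ Δ`, `r_k = 0` for `k > Δ`,
and `Σ_{k=3}^Δ r_k = 1`. -/
def memR (Δ : ℕ) (r : ℕ → ℝ) : Prop :=
  r 2 = -1 ∧ (∀ k, 3 ≤ k → k ≤ Δ → 0 ≤ r k) ∧ (∀ k, Δ < k → r k = 0) ∧
    (∑ k ∈ Finset.Icc 3 Δ, r k) = 1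

/-- The Molloy–Reed constant `Υ_r = Σ_{k=3}^Δ k(k-2) r_k`. -/
def Upsilon (Δ : ℕ) (r : ℕ → ℝ) : ℝ := ∑ k ∈ Finset.Icc 3 Δ, (k : ℝ) * ((k : ℝ) - 2) * r k

/-- `Λ_r(t) = λ'(t) · ∫_0^{λ(t)} e^x/(1+x)² · (Σ_{k=2}^{Δ-1} x^k/k! · s_{k+1}) dx`. -/
def LamErr (lam : ℝ → ℝ) (Δ : ℕ) (r : ℕ → ℝ) (t : ℝ) : ℝ :=
  deriv lam t * ∫ x in (0:ℝ)..(lam t),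
    Real.exp x / (1 + x) ^ 2 *
      ∑ k ∈ Finset.Icc 2 (Δ - 1), x ^ k / (Nat.factorial k : ℝ) * tailS Δ r (k + 1)

/-- `H_r(t) = e^{-λ(t)} (Λ_r'(t) - λ'(t)Λ_r(t) + λ'(t) Σ_{k=0}^{Δ-2} λ(t)^k/k! · r_{k+2})`. -/
def Herr (lam : ℝ → ℝ) (Δ : ℕ) (r : ℕ → ℝ) (t : ℝ) : ℝ :=
  Real.exp (-lam t) *
    (deriv (LamErr lam Δ r) t - deriv lam t * LamErr lam Δ r t +
      deriv lam t * ∑ k ∈ Finset.range (Δ - 1), lam t ^ k / (Nat.factorial k : ℝ) * r (k + 2))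

/-- `I_r(t) = e^{-λ(t)} ( -Λ_r(t) + Σ_{k=1}^{Δ-2} λ(t)^k/k! · s_{k+2})`. -/
def Ierr (lam : ℝ → ℝ) (Δ : ℕ) (r : ℕ → ℝ) (t : ℝ) : ℝ :=
  Real.exp (-lam t) *
    (-LamErr lam Δ r t +
      ∑ k ∈ Finset.Icc 1 (Δ - 2), lam t ^ k / (Nat.factorial k : ℝ) * tailS Δ r (k + 2))

/-- `u(t) = 1 + λ(t) ∫_0^t (λ'(s)-1)/λ(s)² ds`. -/
def uAux (lam : ℝ → ℝ) (t : ℝ) : ℝ :=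
  1 + lam t * ∫ s in (0:ℝ)..t, (deriv lam s - 1) / (lam s) ^ 2

/-- `α_r(t) = -∫_0^t u(s) H_r(s) λ(s) ds`. -/
def alphaAux (lam : ℝ → ℝ) (Δ : ℕ) (r : ℕ → ℝ) (t : ℝ) : ℝ :=
  -∫ s in (0:ℝ)..t, uAux lam s * Herr lam Δ r s * lam s

/-- `β_r(t) = ∫_0^t H_r(s) λ(s)² ds`. -/
def betaAux (lam : ℝ → ℝ) (Δ : ℕ) (r : ℕ → ℝ) (t : ℝ) : ℝ :=
  ∫ s in (0:ℝ)..t, Herr lam Δ r s * (lam s) ^ 2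

/-- `ω_r(t) = α_r(t) λ(t) + β_r(t) u(t)`. -/
def omegaAux (lam : ℝ → ℝ) (Δ : ℕ) (r : ℕ → ℝ) (t : ℝ) : ℝ :=
  alphaAux lam Δ r t * lam t + betaAux lam Δ r t * uAux lam t

/-- `t^-_{p,δ} = (1-δ)/(ε Υ_r)`. -/
def tMinus (Δ : ℕ) (r : ℕ → ℝ) (ε δ : ℝ) : ℝ := (1 - δ) / (ε * Upsilon Δ r)

/-- `t^+_{p,δ} = (1+δ)/(ε Υ_r)`. -/
def tPlus (Δ : ℕ) (r : ℕ → ℝ) (ε δ : ℝ) : ℝ := (1 + δ) / (ε * Upsilon Δ r)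

/-- `w^-_{p,δ}`. -/
def wMinus (lam : ℝ → ℝ) (Δ : ℕ) (r : ℕ → ℝ) (ε δ : ℝ) (t : ℝ) : ℝ :=
  if t ≤ tMinus Δ r ε δ then lam t + (1 + δ / 2) * ε * omegaAux lam Δ r t
  else lam (tMinus Δ r ε δ) + (1 + δ / 2) * ε * omegaAux lam Δ r (tMinus Δ r ε δ)

/-- `w^+_{p,δ}`. -/
def wPlus (lam : ℝ → ℝ) (Δ : ℕ) (r : ℕ → ℝ) (ε δ : ℝ) (t : ℝ) : ℝ :=
  if t ≤ tPlus Δ r ε δ then lam t + (1 - δ / 2) * ε * omegaAux lam Δ r t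
  else lam (tPlus Δ r ε δ) + (1 - δ / 2) * ε * omegaAux lam Δ r (tPlus Δ r ε δ)

/-- `Ī^-_{p,δ}(t) = e^{-λ(t)} + (1-δ) ε I_r(t)`. -/
def IbarMinus (lam : ℝ → ℝ) (Δ : ℕ) (r : ℕ → ℝ) (ε δ : ℝ) (t : ℝ) : ℝ :=
  Real.exp (-lam t) + (1 - δ) * ε * Ierr lam Δ r t

/-- `Ī^+_{p,δ}(t) = e^{-λ(t)} + (1+δ) ε I_r(t)`. -/
def IbarPlus (lam : ℝ → ℝ) (Δ : ℕ) (r : ℕ → ℝ) (ε δ : ℝ) (t : ℝ) : ℝ :=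
  Real.exp (-lam t) + (1 + δ) * ε * Ierr lam Δ r t

/-- `Ĩ_p(x) = e^{-x} (1 + ε Σ_{k=1}^{Δ-2} x^k/k! · s_{k+2})`. -/
def Itilde (Δ : ℕ) (r : ℕ → ℝ) (ε : ℝ) (x : ℝ) : ℝ :=
  Real.exp (-x) *
    (1 + ε * ∑ k ∈ Finset.Icc 1 (Δ - 2), x ^ k / (Nat.factorial k : ℝ) * tailS Δ r (k + 2))

/-!
Along the solution, `λ' = e^{-λ}(1 + λ)` turns `Λ_r(t)` and `I_r(t)` into explicit functions of
`y = λ(t)` alone (`LamErrOfLam`, `IerrOfLam`). Since `r_{k+2} = s_{k+2} - s_{k+3}`, with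
`s_2 = s_{Δ+1} = 0`, the polynomial in `H_r` is `S - S'`, where `S` is the polynomial in `I_r`;
the chain rule then gives `(IerrOfLam ∘ λ)' = -H_r` on `(0, ∞)`. All coefficients lie in
`[-1, 1]`, so `|H_r(s)| ≲ (1 + λ)^{Δ+3} e^{-2λ} ≲ e^{-3λ/2}`, and `e^{λ(s)} ≥ 1 + s`
turns this into the integrable majorant `(1 + s)^{-3/2}`. As `λ → ∞` and `IerrOfLam y → 0`, the
fundamental theorem of calculus on `[t, ∞)` gives `∫_t^∞ H_r = I_r(t)`, which vanishes at
`t = 0`.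
-/

open scoped Nat Topology

def expPoly (c : ℕ → ℝ) (s : Finset ℕ) (x : ℝ) : ℝ :=
  ∑ k ∈ s, x ^ k / (Nat.factorial k : ℝ) * c k

section expPoly

variable (c : ℕ → ℝ)

theorem continuous_expPoly (s : Finset ℕ) : Continuous (expPoly c s) := by
  unfold expPoly
  fun_prop

theorem expPoly_Icc_one (n : ℕ) (x : ℝ) :
    expPoly c (Finset.Icc 1 n) x =
      ∑ k ∈ Finset.range n, x ^ (k + 1) / (Nat.factorial (k + 1) : ℝ) * c (k + 1) := by
  rw [expPoly, ← Finset.Ico_add_one_right_eq_Icc, Finset.sum_Ico_eq_sum_range]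
  simp only [Nat.add_sub_cancel, add_comm 1]

theorem hasDerivAt_expPoly_Icc_one (n : ℕ) (x : ℝ) :
    HasDerivAt (expPoly c (Finset.Icc 1 n))
      (expPoly (fun k => c (k + 1)) (Finset.range n) x) x := by
  have hsum : HasDerivAt (fun y => ∑ k ∈ Finset.range n,
      y ^ (k + 1) / (Nat.factorial (k + 1) : ℝ) * c (k + 1))
      (∑ k ∈ Finset.range n,
        ((k + 1 : ℕ) : ℝ) * x ^ k / (Nat.factorial (k + 1) : ℝ) * c (k + 1)) x :=
    HasDerivAt.fun_sum fun k _ => ((hasDerivAt_pow (k + 1) x).div_const _).mul_const _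
  convert hsum using 1
  · exact funext (expPoly_Icc_one c n)
  · refine Finset.sum_congr rfl fun k _ => ?_
    rw [Nat.factorial_succ, Nat.cast_mul, mul_div_mul_left _ _ (by positivity)]

theorem abs_expPoly_le {s : Finset ℕ} {n : ℕ} (hs : s ⊆ Finset.range (n + 1))
    (hc : ∀ k ∈ s, |c k| ≤ 1) {x : ℝ} (hx : 0 ≤ x) : |expPoly c s x| ≤ (1 + x) ^ n := by
  calc |expPoly c s x|
      ≤ ∑ k ∈ s, x ^ k / (Nat.factorial k : ℝ) := by
        refine (Finset.abs_sum_le_sum_abs _ _).trans (Finset.sum_le_sum fun k hk => ?_)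
        rw [abs_mul, abs_of_nonneg (by positivity)]
        exact mul_le_of_le_one_right (by positivity) (hc k hk)
    _ ≤ ∑ k ∈ Finset.range (n + 1), x ^ k / (Nat.factorial k : ℝ) :=
        Finset.sum_le_sum_of_subset_of_nonneg hs fun _ _ _ => by positivity
    _ ≤ ∑ k ∈ Finset.range (n + 1), x ^ k * 1 ^ (n - k) * (n.choose k : ℝ) := by
        refine Finset.sum_le_sum fun k hk => ?_
        have hchoose : (1 : ℝ) ≤ n.choose k :=
          Nat.one_le_cast.mpr (Nat.choose_pos (Nat.lt_succ_iff.mp (Finset.mem_range.mp hk)))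
        rw [one_pow, mul_one]
        exact (div_le_self (by positivity) (Nat.one_le_cast.mpr k.factorial_pos)).trans
          (le_mul_of_one_le_right (by positivity) hchoose)
    _ = (1 + x) ^ n := by rw [add_comm 1 x, add_pow]

end expPoly

section tails

variable {Δ : ℕ} {r : ℕ → ℝ} {j : ℕ}

theorem tailS_eq_add (hj : j ≤ Δ) : tailS Δ r j = r j + tailS Δ r (j + 1) := by
  rw [tailS, tailS, ← Finset.add_sum_Ioc_eq_sum_Icc hj, Finset.Icc_add_one_left_eq_Ioc]

theorem tailS_of_lt (hj : Δ < j) : tailS Δ r j = 0 := by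
  rw [tailS, Finset.Icc_eq_empty_of_lt hj, Finset.sum_empty]

theorem tailS_two (hΔ : 2 ≤ Δ) (hr : memR Δ r) : tailS Δ r 2 = 0 := by
  rw [tailS_eq_add hΔ, hr.1, show tailS Δ r 3 = 1 from hr.2.2.2]
  norm_num

theorem abs_tailS_le_one (hr : memR Δ r) (hj : 3 ≤ j) : |tailS Δ r j| ≤ 1 := by
  have hnonneg : ∀ d ∈ Finset.Icc 3 Δ, 0 ≤ r d := fun d hd =>
    hr.2.1 d (Finset.mem_Icc.mp hd).1 (Finset.mem_Icc.mp hd).2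
  have hsub : Finset.Icc j Δ ⊆ Finset.Icc 3 Δ := Finset.Icc_subset_Icc_left hj
  rw [tailS, abs_of_nonneg (Finset.sum_nonneg fun d hd => hnonneg d (hsub hd)), ← hr.2.2.2]
  exact Finset.sum_le_sum_of_subset_of_nonneg hsub fun d hd _ => hnonneg d hd

end tails

def lamPoly (Δ : ℕ) (r : ℕ → ℝ) : ℝ → ℝ :=
  expPoly (fun k => tailS Δ r (k + 1)) (Finset.Icc 2 (Δ - 1))

def ierrPoly (Δ : ℕ) (r : ℕ → ℝ) : ℝ → ℝ :=
  expPoly (fun k => tailS Δ r (k + 2)) (Finset.Icc 1 (Δ - 2))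

def ierrPolyDeriv (Δ : ℕ) (r : ℕ → ℝ) : ℝ → ℝ :=
  expPoly (fun k => tailS Δ r (k + 3)) (Finset.range (Δ - 2))

def herrPoly (Δ : ℕ) (r : ℕ → ℝ) : ℝ → ℝ :=
  expPoly (fun k => r (k + 2)) (Finset.range (Δ - 1))

section polys

variable {Δ : ℕ} {r : ℕ → ℝ}

theorem hasDerivAt_ierrPoly (x : ℝ) : HasDerivAt (ierrPoly Δ r) (ierrPolyDeriv Δ r x) x :=
  hasDerivAt_expPoly_Icc_one _ _ x

theorem herrPoly_eq_sub (hΔ : 2 ≤ Δ) (hr : memR Δ r) (x : ℝ) :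
    herrPoly Δ r x = ierrPoly Δ r x - ierrPolyDeriv Δ r x := by
  obtain ⟨n, rfl⟩ : ∃ n, Δ = n + 2 := ⟨Δ - 2, by omega⟩
  have hsplit : herrPoly (n + 2) r x =
      expPoly (fun k => tailS (n + 2) r (k + 2)) (Finset.range (n + 1)) x -
        expPoly (fun k => tailS (n + 2) r (k + 3)) (Finset.range (n + 1)) x := by
    simp only [herrPoly, expPoly, ← Finset.sum_sub_distrib, ← mul_sub]
    refine Finset.sum_congr rfl fun k hk => ?_
    rw [tailS_eq_add (by simp at hk; omega : k + 2 ≤ n + 2)]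
    ring
  rw [hsplit, ierrPoly, ierrPolyDeriv, expPoly_Icc_one, Nat.add_sub_cancel, expPoly, expPoly,
    expPoly, Finset.sum_range_succ', Finset.sum_range_succ (n := n),
    tailS_two (by omega) hr, tailS_of_lt (by omega : n + 2 < n + 3)]
  simp

end polys

def lamIntegral (Δ : ℕ) (r : ℕ → ℝ) (y : ℝ) : ℝ :=
  ∫ x in (0 : ℝ)..y, Real.exp x / (1 + x) ^ 2 * lamPoly Δ r x

def LamErrOfLam (Δ : ℕ) (r : ℕ → ℝ) (y : ℝ) : ℝ :=
  Real.exp (-y) * (1 + y) * lamIntegral Δ r y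

def IerrOfLam (Δ : ℕ) (r : ℕ → ℝ) (y : ℝ) : ℝ :=
  Real.exp (-y) * (-LamErrOfLam Δ r y + ierrPoly Δ r y)

def IerrOfLamDeriv (Δ : ℕ) (r : ℕ → ℝ) (y : ℝ) : ℝ :=
  Real.exp (-y) * (Real.exp (-y) * (1 + 2 * y) * lamIntegral Δ r y - lamPoly Δ r y / (1 + y)
    - ierrPoly Δ r y + ierrPolyDeriv Δ r y)

section calculus

variable {Δ : ℕ} {r : ℕ → ℝ} {y : ℝ}

theorem continuousOn_lamIntegrand :
    ContinuousOn (fun x => Real.exp x / (1 + x) ^ 2 * lamPoly Δ r x) (Set.Ioi (-1)) := by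
  refine (Real.continuous_exp.continuousOn.div (by fun_prop) fun x hx => ?_).mul
    (continuous_expPoly _ _).continuousOn
  have : (0 : ℝ) < 1 + x := by linarith [Set.mem_Ioi.mp hx]
  positivity

theorem hasDerivAt_lamIntegral (hy : -1 < y) :
    HasDerivAt (lamIntegral Δ r) (Real.exp y / (1 + y) ^ 2 * lamPoly Δ r y) y := by
  have hsub : Set.uIcc 0 y ⊆ Set.Ioi (-1) := fun x hx =>
    lt_of_lt_of_le (lt_min (by norm_num) hy) hx.1
  exact intervalIntegral.integral_hasDerivAt_right
    ((continuousOn_lamIntegrand.mono hsub).intervalIntegrable)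
    (continuousOn_lamIntegrand.stronglyMeasurableAtFilter isOpen_Ioi _ hy)
    (continuousOn_lamIntegrand.continuousAt (Ioi_mem_nhds hy))

theorem hasDerivAt_LamErrOfLam (hy : -1 < y) :
    HasDerivAt (LamErrOfLam Δ r)
      (lamPoly Δ r y / (1 + y) - y * Real.exp (-y) * lamIntegral Δ r y) y := by
  have hE : HasDerivAt (fun y => Real.exp (-y)) (-Real.exp (-y)) y := by
    simpa using (hasDerivAt_neg y).exp
  refine ((hE.fun_mul ((hasDerivAt_id' y).const_add 1)).fun_mul
    (hasDerivAt_lamIntegral hy)).congr_deriv ?_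
  have h1 : 1 + y ≠ 0 := by linarith
  rw [Real.exp_neg]
  field_simp
  ring

theorem hasDerivAt_IerrOfLam (hy : -1 < y) :
    HasDerivAt (IerrOfLam Δ r) (IerrOfLamDeriv Δ r y) y := by
  have hE : HasDerivAt (fun y => Real.exp (-y)) (-Real.exp (-y)) y := by
    simpa using (hasDerivAt_neg y).exp
  refine (hE.fun_mul ((hasDerivAt_LamErrOfLam hy).fun_neg.fun_add
    (hasDerivAt_ierrPoly y))).congr_deriv ?_
  rw [IerrOfLamDeriv, LamErrOfLam]
  ring

end calculus

section ode

def SolvesLamODE (lam : ℝ → ℝ) : Prop :=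
  ∀ t : ℝ, 0 ≤ t → deriv lam t = Real.exp (-lam t) * (1 + lam t)

variable {lam : ℝ → ℝ}

-- Fencing: wherever `lam` vanishes, the equation gives `lam' = 1 > 0`.
theorem lam_nonneg (hdiff : Differentiable ℝ lam) (h0 : lam 0 = 0) (hode : SolvesLamODE lam)
    {t : ℝ} (ht : 0 ≤ t) : 0 ≤ lam t :=
  image_le_of_deriv_right_lt_deriv_boundary (f' := fun _ => 0) continuousOn_const
    (fun _ _ => hasDerivWithinAt_const _ _ _) h0.ge (fun x => (hdiff x).hasDerivAt)
    (fun x hx hx0 => by simp [hode x hx.1, ← hx0]) ⟨ht, le_rfl⟩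

theorem one_add_le_exp_lam (hdiff : Differentiable ℝ lam) (h0 : lam 0 = 0)
    (hode : SolvesLamODE lam) {t : ℝ} (ht : 0 ≤ t) : 1 + t ≤ Real.exp (lam t) := by
  refine image_le_of_deriv_right_le_deriv_boundary (f := fun x => 1 + x) (f' := fun _ => 1)
    (B := fun x => Real.exp (lam x)) (B' := fun x => Real.exp (lam x) * deriv lam x)
    (by fun_prop) (fun x _ => ((hasDerivAt_id x).const_add 1).hasDerivWithinAt) (by simp [h0])
    (hdiff.continuous.rexp.continuousOn) (fun x _ => (hdiff x).hasDerivAt.exp.hasDerivWithinAt)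
    (fun x hx => ?_) ⟨ht, le_rfl⟩
  rw [hode x hx.1, ← mul_assoc, ← Real.exp_add, add_neg_cancel, Real.exp_zero, one_mul]
  linarith [lam_nonneg hdiff h0 hode hx.1]

theorem tendsto_lam_atTop (hdiff : Differentiable ℝ lam) (h0 : lam 0 = 0)
    (hode : SolvesLamODE lam) :
    Tendsto lam atTop atTop := by
  refine tendsto_atTop_mono' _ ?_
    (Real.tendsto_log_atTop.comp (tendsto_atTop_add_const_left _ 1 tendsto_id))
  filter_upwards [eventually_ge_atTop 0] with t ht
  exact (Real.log_le_iff_le_exp (by positivity)).mpr (one_add_le_exp_lam hdiff h0 hode ht)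

end ode

section alongLam

variable {Δ : ℕ} {r : ℕ → ℝ} {lam : ℝ → ℝ}

theorem LamErr_eq (hode : SolvesLamODE lam) {t : ℝ} (ht : 0 ≤ t) :
    LamErr lam Δ r t = LamErrOfLam Δ r (lam t) := by
  rw [LamErr, hode t ht]
  rfl

theorem Ierr_eq (hode : SolvesLamODE lam) {t : ℝ} (ht : 0 ≤ t) :
    Ierr lam Δ r t = IerrOfLam Δ r (lam t) := by
  rw [Ierr, LamErr_eq hode ht]
  rfl

theorem hasDerivAt_lam (hdiff : Differentiable ℝ lam) (hode : SolvesLamODE lam)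
    {s : ℝ} (hs : 0 ≤ s) : HasDerivAt lam (Real.exp (-lam s) * (1 + lam s)) s :=
  hode s hs ▸ (hdiff s).hasDerivAt

theorem Herr_eq (hΔ : 2 ≤ Δ) (hr : memR Δ r) (hdiff : Differentiable ℝ lam) (h0 : lam 0 = 0)
    (hode : SolvesLamODE lam) {s : ℝ} (hs : 0 < s) :
    Herr lam Δ r s = -(Real.exp (-lam s) * (1 + lam s) * IerrOfLamDeriv Δ r (lam s)) := by
  have hy : -1 < lam s := by linarith [lam_nonneg hdiff h0 hode hs.le]
  have hLamErr := ((hasDerivAt_LamErrOfLam (Δ := Δ) (r := r) hy).comp s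
    (hasDerivAt_lam hdiff hode hs.le)).congr_of_eventuallyEq
    (eventually_of_mem (Ioi_mem_nhds hs) fun t ht => LamErr_eq hode (le_of_lt ht))
  have hP := herrPoly_eq_sub hΔ hr (lam s)
  simp only [herrPoly, expPoly] at hP
  rw [Herr, hLamErr.deriv, LamErr_eq hode hs.le, hode s hs.le, hP, IerrOfLamDeriv, LamErrOfLam]
  ring

theorem hasDerivAt_neg_IerrOfLam_comp (hΔ : 2 ≤ Δ) (hr : memR Δ r)
    (hdiff : Differentiable ℝ lam) (h0 : lam 0 = 0) (hode : SolvesLamODE lam)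
    {s : ℝ} (hs : 0 < s) : HasDerivAt (fun t => -IerrOfLam Δ r (lam t)) (Herr lam Δ r s) s := by
  have hy : -1 < lam s := by linarith [lam_nonneg hdiff h0 hode hs.le]
  rw [Herr_eq hΔ hr hdiff h0 hode hs]
  exact ((hasDerivAt_IerrOfLam hy).comp s (hasDerivAt_lam hdiff hode hs.le)).neg.congr_deriv
    (by ring)

end alongLam

theorem one_add_pow_le_exp {x : ℝ} (hx : -1 ≤ x) (n : ℕ) :
    (1 + x) ^ n ≤ 2 ^ n * n ! * Real.exp ((1 + x) / 2) := by
  have h := Real.pow_div_factorial_le_exp (x := (1 + x) / 2) (by linarith) n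
  rw [div_pow, div_div, div_le_iff₀ (by positivity)] at h
  linarith

section bounds

variable {Δ : ℕ} {r : ℕ → ℝ} {y : ℝ}

theorem abs_expPoly_tailS_le (hr : memR Δ r) (hy : 0 ≤ y) {m : ℕ} {s : Finset ℕ}
    (hm : ∀ k ∈ s, 3 ≤ k + m) (hs : s ⊆ Finset.range (Δ + 1)) :
    |expPoly (fun k => tailS Δ r (k + m)) s y| ≤ (1 + y) ^ Δ :=
  abs_expPoly_le _ hs (fun k hk => abs_tailS_le_one hr (hm k hk)) hy

theorem abs_lamPoly_le (hr : memR Δ r) (hy : 0 ≤ y) : |lamPoly Δ r y| ≤ (1 + y) ^ Δ :=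
  abs_expPoly_tailS_le hr hy (fun k hk => by simp at hk; omega)
    (fun k hk => by simp at hk ⊢; omega)

theorem abs_ierrPoly_le (hr : memR Δ r) (hy : 0 ≤ y) : |ierrPoly Δ r y| ≤ (1 + y) ^ Δ :=
  abs_expPoly_tailS_le hr hy (fun k hk => by simp at hk; omega)
    (fun k hk => by simp at hk ⊢; omega)

theorem abs_ierrPolyDeriv_le (hr : memR Δ r) (hy : 0 ≤ y) :
    |ierrPolyDeriv Δ r y| ≤ (1 + y) ^ Δ :=
  abs_expPoly_tailS_le hr hy (fun k hk => by omega) (fun k hk => by simp at hk ⊢; omega)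

theorem exp_neg_mul_abs_lamIntegral_le (hr : memR Δ r) (hy : 0 ≤ y) :
    Real.exp (-y) * |lamIntegral Δ r y| ≤ (1 + y) ^ (Δ + 1) := by
  have hintegrand : ∀ x ∈ Set.uIoc 0 y,
      ‖Real.exp x / (1 + x) ^ 2 * lamPoly Δ r x‖ ≤ Real.exp y * (1 + y) ^ Δ := by
    intro x hx
    rw [Set.uIoc_of_le hy] at hx
    rw [Real.norm_eq_abs, abs_mul, abs_of_nonneg (by positivity)]
    refine mul_le_mul ?_ ?_ (abs_nonneg _) (Real.exp_pos y).le
    · exact (div_le_self (Real.exp_pos x).le (one_le_pow₀ (by linarith [hx.1]))).trans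
        (Real.exp_le_exp.mpr hx.2)
    · exact (abs_lamPoly_le hr hx.1.le).trans
        (pow_le_pow_left₀ (by linarith [hx.1]) (by linarith [hx.2]) Δ)
  have hF := intervalIntegral.norm_integral_le_of_norm_le_const hintegrand
  rw [sub_zero, abs_of_nonneg hy] at hF
  calc Real.exp (-y) * |lamIntegral Δ r y|
      ≤ Real.exp (-y) * (Real.exp y * (1 + y) ^ Δ * y) := by gcongr; exact hF
    _ = (1 + y) ^ Δ * y := by rw [← mul_assoc, ← mul_assoc, ← Real.exp_add]; simp
    _ ≤ (1 + y) ^ (Δ + 1) := by rw [pow_succ]; gcongr; linarith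

theorem abs_IerrOfLam_le (hr : memR Δ r) (hy : 0 ≤ y) :
    |IerrOfLam Δ r y| ≤ 2 * (1 + y) ^ (Δ + 2) * Real.exp (-y) := by
  have hF := exp_neg_mul_abs_lamIntegral_le hr hy
  have hS := abs_ierrPoly_le hr hy
  have hu : (1 : ℝ) ≤ (1 + y) ^ 2 := one_le_pow₀ (by linarith)
  have hinner : |-LamErrOfLam Δ r y + ierrPoly Δ r y| ≤ 2 * (1 + y) ^ (Δ + 2) := by
    calc |-LamErrOfLam Δ r y + ierrPoly Δ r y|
        ≤ (1 + y) * (Real.exp (-y) * |lamIntegral Δ r y|) + |ierrPoly Δ r y| := by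
          refine (abs_add_le _ _).trans (le_of_eq ?_)
          rw [abs_neg, LamErrOfLam, abs_mul, abs_mul, abs_of_pos (Real.exp_pos _),
            abs_of_nonneg (by linarith : (0 : ℝ) ≤ 1 + y)]
          ring
      _ ≤ (1 + y) * (1 + y) ^ (Δ + 1) + (1 + y) ^ Δ * (1 + y) ^ 2 :=
          add_le_add (mul_le_mul_of_nonneg_left hF (by linarith))
            (hS.trans (le_mul_of_one_le_right (by positivity) hu))
      _ = 2 * (1 + y) ^ (Δ + 2) := by ring
  rw [IerrOfLam, abs_mul, abs_of_pos (Real.exp_pos _), mul_comm]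
  gcongr

theorem abs_IerrOfLamDeriv_le (hr : memR Δ r) (hy : 0 ≤ y) :
    |IerrOfLamDeriv Δ r y| ≤ 5 * (1 + y) ^ (Δ + 2) * Real.exp (-y) := by
  have hF := exp_neg_mul_abs_lamIntegral_le hr hy
  have hQ : |lamPoly Δ r y / (1 + y)| ≤ (1 + y) ^ Δ := by
    rw [abs_div, abs_of_pos (by linarith : (0 : ℝ) < 1 + y)]
    exact (div_le_self (abs_nonneg _) (by linarith)).trans (abs_lamPoly_le hr hy)
  have hS := abs_ierrPoly_le hr hy
  have hS' := abs_ierrPolyDeriv_le hr hy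
  have hu : (1 : ℝ) ≤ (1 + y) ^ 2 := one_le_pow₀ (by linarith)
  have hp : 0 ≤ (1 + y) ^ Δ := by positivity
  have hinner : |Real.exp (-y) * (1 + 2 * y) * lamIntegral Δ r y - lamPoly Δ r y / (1 + y)
      - ierrPoly Δ r y + ierrPolyDeriv Δ r y| ≤ 5 * (1 + y) ^ (Δ + 2) := by
    have hfirst : |Real.exp (-y) * (1 + 2 * y) * lamIntegral Δ r y|
        ≤ 2 * (1 + y) * (1 + y) ^ (Δ + 1) := by
      rw [abs_mul, abs_mul, abs_of_pos (Real.exp_pos _),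
        abs_of_nonneg (by linarith : (0 : ℝ) ≤ 1 + 2 * y), mul_comm _ (1 + 2 * y), mul_assoc]
      exact mul_le_mul (by linarith) hF (by positivity) (by positivity)
    have hp2 := le_mul_of_one_le_right hp hu
    calc _ ≤ 2 * (1 + y) * (1 + y) ^ (Δ + 1) + 3 * ((1 + y) ^ Δ * (1 + y) ^ 2) := by
          refine abs_le.mpr ⟨?_, ?_⟩ <;>
          linarith [abs_le.mp hfirst, abs_le.mp hQ, abs_le.mp hS, abs_le.mp hS']
      _ = 5 * (1 + y) ^ (Δ + 2) := by ring
  rw [IerrOfLamDeriv, abs_mul, abs_of_pos (Real.exp_pos _), mul_comm]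
  gcongr

theorem tendsto_IerrOfLam_atTop (hr : memR Δ r) : Tendsto (IerrOfLam Δ r) atTop (𝓝 0) := by
  have hlim : Tendsto (fun y => 2 * Real.exp 1 * ((1 + y) ^ (Δ + 2) * Real.exp (-(1 + y))))
      atTop (𝓝 0) := by
    simpa using ((tendsto_pow_mul_exp_neg_atTop_nhds_zero (Δ + 2)).comp
      (tendsto_atTop_add_const_left _ 1 tendsto_id)).const_mul (2 * Real.exp 1)
  refine squeeze_zero_norm' ?_ hlim
  filter_upwards [eventually_ge_atTop 0] with y hy
  refine (abs_IerrOfLam_le hr hy).trans (le_of_eq ?_)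
  rw [neg_add, Real.exp_add, Real.exp_neg 1]
  field_simp

end bounds

section integrability

variable {Δ : ℕ} {r : ℕ → ℝ} {lam : ℝ → ℝ}

theorem abs_Herr_le (hΔ : 2 ≤ Δ) (hr : memR Δ r) (hdiff : Differentiable ℝ lam)
    (h0 : lam 0 = 0) (hode : SolvesLamODE lam) {s : ℝ} (hs : 0 < s) :
    |Herr lam Δ r s| ≤
      5 * 2 ^ (Δ + 3) * (Δ + 3)! * Real.exp (1 / 2) * (1 + s) ^ (-(3 / 2) : ℝ) := by
  set y := lam s
  have hy : 0 ≤ y := lam_nonneg hdiff h0 hode hs.le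
  have hexp : Real.exp ((1 + y) / 2) * (Real.exp (-y) * Real.exp (-y)) =
      Real.exp (1 / 2) * Real.exp y ^ (-(3 / 2) : ℝ) := by
    rw [← Real.exp_mul, ← Real.exp_add, ← Real.exp_add, ← Real.exp_add]
    ring_nf
  calc |Herr lam Δ r s|
      = Real.exp (-y) * (1 + y) * |IerrOfLamDeriv Δ r y| := by
        rw [Herr_eq hΔ hr hdiff h0 hode hs, abs_neg, abs_mul, abs_of_nonneg (by positivity)]
    _ ≤ Real.exp (-y) * (1 + y) * (5 * (1 + y) ^ (Δ + 2) * Real.exp (-y)) := by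
        gcongr
        exact abs_IerrOfLamDeriv_le hr hy
    _ = 5 * (1 + y) ^ (Δ + 3) * (Real.exp (-y) * Real.exp (-y)) := by ring
    _ ≤ 5 * (2 ^ (Δ + 3) * (Δ + 3)! * Real.exp ((1 + y) / 2)) *
          (Real.exp (-y) * Real.exp (-y)) := by
        gcongr
        exact one_add_pow_le_exp (by linarith) _
    _ = 5 * 2 ^ (Δ + 3) * (Δ + 3)! * Real.exp (1 / 2) * Real.exp y ^ (-(3 / 2) : ℝ) := by
        rw [mul_assoc 5, mul_assoc, hexp]
        ring
    _ ≤ 5 * 2 ^ (Δ + 3) * (Δ + 3)! * Real.exp (1 / 2) * (1 + s) ^ (-(3 / 2) : ℝ) := by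
        exact mul_le_mul_of_nonneg_left (Real.rpow_le_rpow_of_nonpos (by linarith)
          (one_add_le_exp_lam hdiff h0 hode hs.le) (by norm_num)) (by positivity)

theorem integrableOn_Herr (hΔ : 2 ≤ Δ) (hr : memR Δ r) (hdiff : Differentiable ℝ lam)
    (h0 : lam 0 = 0) (hode : SolvesLamODE lam) {t : ℝ} (ht : 0 ≤ t) :
    IntegrableOn (Herr lam Δ r) (Set.Ioi t) := by
  have hmajorant : Integrable (fun s : ℝ =>
      5 * 2 ^ (Δ + 3) * (Δ + 3)! * Real.exp (1 / 2) * (1 + ‖s‖) ^ (-(3 / 2) : ℝ)) :=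
    (integrable_one_add_norm (by norm_num)).const_mul _
  have hderiv : ∀ s ∈ Set.Ioi t,
      deriv (fun u => -IerrOfLam Δ r (lam u)) s = Herr lam Δ r s := fun s hs =>
    (hasDerivAt_neg_IerrOfLam_comp hΔ hr hdiff h0 hode (ht.trans_lt hs)).deriv
  refine hmajorant.integrableOn.mono'
    ((measurable_deriv _).aestronglyMeasurable.congr
      (ae_restrict_of_forall_mem measurableSet_Ioi hderiv))
    (ae_restrict_of_forall_mem measurableSet_Ioi fun s hs => ?_)
  have hs0 : 0 < s := ht.trans_lt hs
  rw [Real.norm_eq_abs, Real.norm_eq_abs, abs_of_pos hs0]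
  exact abs_Herr_le hΔ hr hdiff h0 hode hs0

theorem integral_Ioi_Herr (hΔ : 2 ≤ Δ) (hr : memR Δ r) (hdiff : Differentiable ℝ lam)
    (h0 : lam 0 = 0) (hode : SolvesLamODE lam) {t : ℝ} (ht : 0 ≤ t) :
    ∫ s in Set.Ioi t, Herr lam Δ r s = IerrOfLam Δ r (lam t) := by
  have hcont : ContinuousWithinAt (fun u => -IerrOfLam Δ r (lam u)) (Set.Ici t) t :=
    ((hasDerivAt_IerrOfLam (by linarith [lam_nonneg hdiff h0 hode ht])).continuousAt.comp
      hdiff.continuous.continuousAt).neg.continuousWithinAt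
  have hlim : Tendsto (fun u => -IerrOfLam Δ r (lam u)) atTop (𝓝 (-0)) :=
    ((tendsto_IerrOfLam_atTop hr).comp (tendsto_lam_atTop hdiff h0 hode)).neg
  rw [integral_Ioi_of_hasDerivAt_of_tendsto hcont
    (fun s hs => hasDerivAt_neg_IerrOfLam_comp hΔ hr hdiff h0 hode (ht.trans_lt hs))
    (integrableOn_Herr hΔ hr hdiff h0 hode ht) hlim]
  ring

end integrability

theorem IerrOfLam_zero (Δ : ℕ) (r : ℕ → ℝ) : IerrOfLam Δ r 0 = 0 := by
  simp [IerrOfLam, LamErrOfLam, lamIntegral, ierrPoly, expPoly_Icc_one]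

/-- Explicit tail integral of `H_r`: `∫_t^∞ H_r = I_r(t)`, and `∫_0^∞ H_r = 0`. -/
theorem Herr_tail_integral (Δ : ℕ) (hΔ : 3 ≤ Δ) (lam : ℝ → ℝ)
    (hdiff : Differentiable ℝ lam) (h0 : lam 0 = 0)
    (hode : ∀ t : ℝ, 0 ≤ t → deriv lam t = Real.exp (-lam t) * (1 + lam t))
    (r : ℕ → ℝ) (hr : memR Δ r) :
    (∀ t : ℝ, 0 ≤ t →
      MeasureTheory.IntegrableOn (Herr lam Δ r) (Set.Ici t) ∧
      (∫ s in Set.Ici t, Herr lam Δ r s) = Ierr lam Δ r t) ∧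
    (∫ s in Set.Ici (0:ℝ), Herr lam Δ r s) = 0 := by
  have hΔ2 : 2 ≤ Δ := by omega
  have tail : ∀ t : ℝ, 0 ≤ t →
      IntegrableOn (Herr lam Δ r) (Set.Ici t) ∧
        ∫ s in Set.Ici t, Herr lam Δ r s = Ierr lam Δ r t := fun t ht =>
    ⟨(integrableOn_Ici_iff_integrableOn_Ioi).mpr (integrableOn_Herr hΔ2 hr hdiff h0 hode ht),
      by rw [integral_Ici_eq_integral_Ioi, integral_Ioi_Herr hΔ2 hr hdiff h0 hode ht,
        Ierr_eq hode ht]⟩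
  refine ⟨tail, ?_⟩
  rw [(tail 0 le_rfl).2, Ierr_eq hode le_rfl, h0, IerrOfLam_zero]
end
end

section
/- Pointwise bound on H_r (Claim 'Bounds on H_r and β_r', part (a)): Fix an integer Δ ≥ 3. For every r ∈ R_Δ and every t ≥ 0 one has |H_r(t)| ≤ 2·λ'(t)·e^{−λ(t)} · Σ_{k=0}^{Δ−1} λ(t)^k/k!. -/
open Real MeasureTheory Filter

noncomputable section

/-!
On `[0, ∞)` the equation gives `λ'' = -λ λ' e^{-λ}`, so `Λ_r = Φ ∘ λ` with
`Φ(y) = e^{-y} (1 + y) F(y)`, `F(y) = ∫₀^y eˣ P(x) / (1 + x)² dx`, and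
`H_r(t) = λ'(t) e^{-λ(t)} K(λ(t))` where `K(y) = Q(y) + P(y) / (1 + y) - e^{-y} (1 + 2y) F(y)`;
here `P` and `Q` are the polynomials with coefficients `s_{k+1}` and `r_{k+2}`.
For `y ≥ 0`, with `E` the truncated exponential series, the three terms of `K` lie in
`[-1, E]`, `[0, E]` and `[0, 2E - 1]`. The last bound holds because `P(x) ≤ x² S(x)` with
`S(x) = Σ xʲ / (j + 2)!` increasing, so `F(y) ≤ e^y S(y)`, and `(1 + 2y) S(y) ≤ 2E(y) - 1`
termwise.
-/

section ExpTrunc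

open Finset

def expTrunc (n : ℕ) (x : ℝ) : ℝ := ∑ k ∈ range n, x ^ k / (Nat.factorial k : ℝ)

def expTailDivSq (n : ℕ) (x : ℝ) : ℝ := ∑ j ∈ range n, x ^ j / (Nat.factorial (j + 2) : ℝ)

variable {x : ℝ}

lemma expTrunc_le_expTrunc {m n : ℕ} (hmn : m ≤ n) (hx : 0 ≤ x) :
    expTrunc m x ≤ expTrunc n x :=
  sum_le_sum_of_subset_of_nonneg (range_subset_range.2 hmn) fun _ _ _ => by positivity

lemma expTrunc_succ_sub_one (n : ℕ) (x : ℝ) :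
    expTrunc (n + 1) x - 1 = ∑ j ∈ range n, x ^ (j + 1) / (Nat.factorial (j + 1) : ℝ) := by
  simp [expTrunc, sum_range_succ']

lemma expTailDivSq_nonneg (n : ℕ) (hx : 0 ≤ x) : 0 ≤ expTailDivSq n x :=
  sum_nonneg fun _ _ => by positivity

lemma expTailDivSq_monotoneOn (n : ℕ) : MonotoneOn (expTailDivSq n) (Set.Ici 0) :=
  fun _ hx _ _ hxy => sum_le_sum fun _ _ => by gcongr

lemma expTailDivSq_le_expTrunc (n : ℕ) (hx : 0 ≤ x) : expTailDivSq n x ≤ expTrunc n x :=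
  sum_le_sum fun j _ => by gcongr; omega

lemma two_mul_mul_expTailDivSq_le (n : ℕ) (hx : 0 ≤ x) :
    2 * x * expTailDivSq n x ≤ expTrunc (n + 1) x - 1 := by
  rw [expTrunc_succ_sub_one, expTailDivSq, mul_sum]
  refine sum_le_sum fun j _ => ?_
  have hfac : (2 : ℝ) * Nat.factorial (j + 1) ≤ Nat.factorial (j + 2) := by
    rw [Nat.factorial_succ (j + 1)]; push_cast; gcongr; linarith
  rw [pow_succ, ← mul_div_assoc, div_le_div_iff₀ (by positivity) (by positivity)]
  nlinarith [mul_nonneg (pow_nonneg hx j) hx]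

lemma one_add_two_mul_mul_expTailDivSq_le (n : ℕ) (hx : 0 ≤ x) :
    (1 + 2 * x) * expTailDivSq n x ≤ 2 * expTrunc (n + 2) x - 1 := by
  have h₁ : expTailDivSq n x ≤ expTrunc (n + 2) x :=
    (expTailDivSq_le_expTrunc n hx).trans (expTrunc_le_expTrunc (by omega) hx)
  have h₂ : expTrunc (n + 1) x ≤ expTrunc (n + 2) x := expTrunc_le_expTrunc (by omega) hx
  linarith [two_mul_mul_expTailDivSq_le n hx]

end ExpTrunc

def tailPoly (Δ : ℕ) (r : ℕ → ℝ) (x : ℝ) : ℝ :=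
  ∑ k ∈ Finset.Icc 2 (Δ - 1), x ^ k / (Nat.factorial k : ℝ) * tailS Δ r (k + 1)

def coeffPoly (Δ : ℕ) (r : ℕ → ℝ) (x : ℝ) : ℝ :=
  ∑ k ∈ Finset.range (Δ - 1), x ^ k / (Nat.factorial k : ℝ) * r (k + 2)

section Polynomials

open Finset

variable {Δ : ℕ} {r : ℕ → ℝ} {x : ℝ}

lemma memR.tailS_nonneg (hr : memR Δ r) {m : ℕ} (hm : 3 ≤ m) : 0 ≤ tailS Δ r m :=
  sum_nonneg fun d hd => hr.2.1 d (hm.trans (mem_Icc.1 hd).1) (mem_Icc.1 hd).2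

lemma memR.tailS_le_one (hr : memR Δ r) {m : ℕ} (hm : 3 ≤ m) : tailS Δ r m ≤ 1 :=
  hr.2.2.2 ▸ sum_le_sum_of_subset_of_nonneg (Icc_subset_Icc_left hm)
    fun d hd _ => hr.2.1 d (mem_Icc.1 hd).1 (mem_Icc.1 hd).2

lemma memR.le_one (hr : memR Δ r) {k : ℕ} (hk : 2 ≤ k) : r k ≤ 1 := by
  rcases hk.eq_or_lt with rfl | hk
  · linarith [hr.1]
  rcases le_or_gt k Δ with hkΔ | hkΔ
  · rw [← hr.2.2.2]
    exact single_le_sum (fun d hd => hr.2.1 d (mem_Icc.1 hd).1 (mem_Icc.1 hd).2)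
      (mem_Icc.2 ⟨hk, hkΔ⟩)
  · rw [hr.2.2.1 k hkΔ]; exact zero_le_one

lemma sum_Icc_two_pred_eq_sum_range (Δ : ℕ) (f : ℕ → ℝ) :
    ∑ k ∈ Icc 2 (Δ - 1), f k = ∑ j ∈ range (Δ - 2), f (j + 2) := by
  rw [← Ico_add_one_right_eq_Icc, sum_Ico_eq_sum_range]
  exact sum_congr (by congr 1) fun j _ => by rw [add_comm]

lemma tailPoly_zero : tailPoly Δ r 0 = 0 :=
  sum_eq_zero fun k hk => by simp [zero_pow (by grind : k ≠ 0)]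

lemma memR.tailPoly_nonneg (hr : memR Δ r) (hx : 0 ≤ x) : 0 ≤ tailPoly Δ r x :=
  sum_nonneg fun k hk => mul_nonneg (by positivity) (hr.tailS_nonneg (by grind))

lemma memR.tailPoly_le (hr : memR Δ r) (hx : 0 ≤ x) :
    tailPoly Δ r x ≤ x ^ 2 * expTailDivSq (Δ - 2) x := by
  rw [tailPoly, sum_Icc_two_pred_eq_sum_range, expTailDivSq, mul_sum]
  refine sum_le_sum fun j _ => ?_
  calc x ^ (j + 2) / (Nat.factorial (j + 2) : ℝ) * tailS Δ r (j + 2 + 1)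
      ≤ x ^ (j + 2) / (Nat.factorial (j + 2) : ℝ) :=
        mul_le_of_le_one_right (by positivity) (hr.tailS_le_one (by omega))
    _ = x ^ 2 * (x ^ j / (Nat.factorial (j + 2) : ℝ)) := by ring

lemma memR.neg_one_le_coeffPoly (hr : memR Δ r) (hΔ : 2 ≤ Δ) (hx : 0 ≤ x) :
    -1 ≤ coeffPoly Δ r x := by
  obtain ⟨n, rfl⟩ := Nat.exists_eq_add_of_le' hΔ
  rw [coeffPoly, show n + 2 - 1 = n + 1 by omega, sum_range_succ']
  have hrest : 0 ≤ ∑ j ∈ range n, x ^ (j + 1) / (Nat.factorial (j + 1) : ℝ) * r (j + 1 + 2) :=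
    sum_nonneg fun j hj => mul_nonneg (by positivity) (hr.2.1 _ (by omega) (by grind))
  simp [hr.1, hrest]

lemma memR.coeffPoly_le_expTrunc (hr : memR Δ r) (hx : 0 ≤ x) :
    coeffPoly Δ r x ≤ expTrunc Δ x :=
  calc coeffPoly Δ r x ≤ expTrunc (Δ - 1) x :=
        sum_le_sum fun k _ => mul_le_of_le_one_right (by positivity) (hr.le_one (by omega))
    _ ≤ expTrunc Δ x := expTrunc_le_expTrunc (by omega) hx

end Polynomials

def lamErrIntegral (Δ : ℕ) (r : ℕ → ℝ) (y : ℝ) : ℝ :=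
  ∫ x in (0 : ℝ)..y, Real.exp x / (1 + x) ^ 2 * tailPoly Δ r x

def herrProfile (Δ : ℕ) (r : ℕ → ℝ) (y : ℝ) : ℝ :=
  coeffPoly Δ r y + tailPoly Δ r y / (1 + y) -
    Real.exp (-y) * (1 + 2 * y) * lamErrIntegral Δ r y

section LamErrIntegral

open Set

variable {Δ : ℕ} {r : ℕ → ℝ} {y : ℝ}

lemma continuousOn_lamErrIntegrand :
    ContinuousOn (fun x => Real.exp x / (1 + x) ^ 2 * tailPoly Δ r x) (Ioi (-1)) := by
  have : ∀ x ∈ Ioi (-1 : ℝ), (1 + x) ^ 2 ≠ 0 := fun x hx => by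
    have : 0 < 1 + x := by simp only [mem_Ioi] at hx; linarith
    positivity
  unfold tailPoly
  fun_prop (disch := assumption)

lemma intervalIntegrable_lamErrIntegrand (hy : -1 < y) :
    IntervalIntegrable (fun x => Real.exp x / (1 + x) ^ 2 * tailPoly Δ r x)
      MeasureTheory.volume 0 y :=
  (continuousOn_lamErrIntegrand.mono fun x hx => by
    simp only [mem_Ioi]
    rcases le_total 0 y with h | h
    · rw [uIcc_of_le h] at hx; linarith [hx.1]
    · rw [uIcc_of_ge h] at hx; linarith [hx.1]).intervalIntegrable

lemma hasDerivAt_lamErrIntegral (hy : -1 < y) :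
    HasDerivAt (lamErrIntegral Δ r) (Real.exp y / (1 + y) ^ 2 * tailPoly Δ r y) y :=
  intervalIntegral.integral_hasDerivAt_right (intervalIntegrable_lamErrIntegrand hy)
    (continuousOn_lamErrIntegrand.stronglyMeasurableAtFilter isOpen_Ioi _ hy)
    (continuousOn_lamErrIntegrand.continuousAt (Ioi_mem_nhds hy))

lemma memR.lamErrIntegral_nonneg (hr : memR Δ r) (hy : 0 ≤ y) : 0 ≤ lamErrIntegral Δ r y :=
  intervalIntegral.integral_nonneg hy fun x hx =>
    mul_nonneg (by positivity) (hr.tailPoly_nonneg hx.1)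

lemma memR.lamErrIntegral_le (hr : memR Δ r) (hy : 0 ≤ y) :
    lamErrIntegral Δ r y ≤ Real.exp y * expTailDivSq (Δ - 2) y := by
  have hS := expTailDivSq_nonneg (Δ - 2) hy
  have hbound : ∀ x ∈ Icc 0 y, Real.exp x / (1 + x) ^ 2 * tailPoly Δ r x ≤
      Real.exp x * expTailDivSq (Δ - 2) y := fun x ⟨hx, hxy⟩ => by
    have hP : tailPoly Δ r x ≤ (1 + x) ^ 2 * expTailDivSq (Δ - 2) x :=
      (hr.tailPoly_le hx).trans (by gcongr <;> [exact expTailDivSq_nonneg _ hx; linarith])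
    calc Real.exp x / (1 + x) ^ 2 * tailPoly Δ r x
        ≤ Real.exp x / (1 + x) ^ 2 * ((1 + x) ^ 2 * expTailDivSq (Δ - 2) x) := by gcongr
      _ = Real.exp x * expTailDivSq (Δ - 2) x := by field_simp
      _ ≤ Real.exp x * expTailDivSq (Δ - 2) y := by
        gcongr; exact expTailDivSq_monotoneOn _ hx (hx.trans hxy) hxy
  calc lamErrIntegral Δ r y ≤ ∫ x in (0 : ℝ)..y, Real.exp x * expTailDivSq (Δ - 2) y :=
        intervalIntegral.integral_mono_on hy (intervalIntegrable_lamErrIntegrand (by linarith))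
          ((Real.continuous_exp.mul continuous_const).intervalIntegrable _ _) hbound
    _ = (Real.exp y - 1) * expTailDivSq (Δ - 2) y := by
        rw [intervalIntegral.integral_mul_const, integral_exp, Real.exp_zero]
    _ ≤ Real.exp y * expTailDivSq (Δ - 2) y := by nlinarith

lemma hasDerivAt_exp_neg_mul_lamErrIntegral (hy : -1 < y) :
    HasDerivAt (fun y => Real.exp (-y) * (1 + y) * lamErrIntegral Δ r y)
      (tailPoly Δ r y / (1 + y) - y * Real.exp (-y) * lamErrIntegral Δ r y) y := by
  have h1y : 1 + y ≠ 0 := by linarith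
  refine (((hasDerivAt_neg y).exp.mul ((hasDerivAt_id y).const_add 1)).mul
    (hasDerivAt_lamErrIntegral hy)).congr_deriv ?_
  simp only [Pi.mul_apply, id, Real.exp_neg]
  field_simp
  ring

end LamErrIntegral

lemma memR.abs_herrProfile_le {Δ : ℕ} {r : ℕ → ℝ} (hr : memR Δ r) (hΔ : 3 ≤ Δ) {y : ℝ}
    (hy : 0 ≤ y) : |herrProfile Δ r y| ≤ 2 * expTrunc Δ y := by
  obtain ⟨n, rfl⟩ := Nat.exists_eq_add_of_le' (show 2 ≤ Δ by omega)
  have h1y : 0 < 1 + y := by linarith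
  have hS := expTailDivSq_nonneg n hy
  have hyS := two_mul_mul_expTailDivSq_le n hy
  have hP₀ : 0 ≤ tailPoly (n + 2) r y / (1 + y) := div_nonneg (hr.tailPoly_nonneg hy) h1y.le
  have hP₁ : tailPoly (n + 2) r y / (1 + y) ≤ y * expTailDivSq n y := by
    have hP := hr.tailPoly_le hy
    rw [Nat.add_sub_cancel] at hP
    rw [div_le_iff₀ h1y]
    nlinarith [mul_nonneg hy hS]
  have hF₀ : 0 ≤ Real.exp (-y) * (1 + 2 * y) * lamErrIntegral (n + 2) r y :=
    mul_nonneg (by positivity) (hr.lamErrIntegral_nonneg hy)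
  have hF₁ : Real.exp (-y) * (1 + 2 * y) * lamErrIntegral (n + 2) r y ≤
      2 * expTrunc (n + 2) y - 1 :=
    calc _ ≤ Real.exp (-y) * (1 + 2 * y) * (Real.exp y * expTailDivSq n y) := by
          gcongr; exact hr.lamErrIntegral_le hy
      _ = (1 + 2 * y) * expTailDivSq n y := by rw [Real.exp_neg]; field_simp
      _ ≤ 2 * expTrunc (n + 2) y - 1 := one_add_two_mul_mul_expTailDivSq_le n hy
  have hE : expTrunc (n + 1) y ≤ expTrunc (n + 2) y := expTrunc_le_expTrunc (by omega) hy
  have hQ₀ := hr.neg_one_le_coeffPoly (by omega) hy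
  have hQ₁ := hr.coeffPoly_le_expTrunc hy
  rw [herrProfile, abs_le]
  constructor <;> linarith

lemma deriv_eq_zero_of_hasDerivWithinAt_Ici {f : ℝ → ℝ} {t : ℝ}
    (h : HasDerivWithinAt f 0 (Set.Ici t) t) : deriv f t = 0 := by
  by_cases hf : DifferentiableAt ℝ f t
  · rw [← hf.derivWithin (uniqueDiffWithinAt_Ici t), h.derivWithin (uniqueDiffWithinAt_Ici t)]
  · exact deriv_zero_of_not_differentiableAt hf

section ODE

variable {lam : ℝ → ℝ} (hdiff : Differentiable ℝ lam) (h0 : lam 0 = 0)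
  (hode : ∀ t : ℝ, 0 ≤ t → deriv lam t = Real.exp (-lam t) * (1 + lam t))
include hdiff h0 hode

lemma lam_nonneg_s8 {t : ℝ} (ht : 0 ≤ t) : 0 ≤ lam t := by
  have key := image_le_of_deriv_right_lt_deriv_boundary (a := 0) (b := t) (f := fun s => -lam s)
    (f' := fun s => -deriv lam s) (B := fun _ => 0) (B' := fun _ => 0)
    hdiff.continuous.neg.continuousOn
    (fun s _ => (hdiff s).hasDerivAt.neg.hasDerivWithinAt) (by simp [h0])
    (fun _ => hasDerivAt_const _ _)
    (fun s hs hs0 => by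
      rw [hode s hs.1, show lam s = 0 by linarith]
      simp)
  simpa using key ⟨ht, le_rfl⟩

omit hdiff h0 in
lemma LamErr_eq_of_nonneg (Δ : ℕ) (r : ℕ → ℝ) {t : ℝ} (ht : 0 ≤ t) :
    LamErr lam Δ r t = Real.exp (-lam t) * (1 + lam t) * lamErrIntegral Δ r (lam t) := by
  rw [LamErr, hode t ht]; rfl

lemma deriv_LamErr (Δ : ℕ) (r : ℕ → ℝ) {t : ℝ} (ht : 0 ≤ t) :
    deriv (LamErr lam Δ r) t = (tailPoly Δ r (lam t) / (1 + lam t) -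
      lam t * Real.exp (-lam t) * lamErrIntegral Δ r (lam t)) * deriv lam t := by
  have hcomp := (hasDerivAt_exp_neg_mul_lamErrIntegral (Δ := Δ) (r := r)
    (show -1 < lam t by linarith [lam_nonneg_s8 hdiff h0 hode ht])).comp t (hdiff t).hasDerivAt
  have heq : Set.EqOn (LamErr lam Δ r)
      (fun s => Real.exp (-lam s) * (1 + lam s) * lamErrIntegral Δ r (lam s)) (Set.Ici 0) :=
    fun s hs => LamErr_eq_of_nonneg hode Δ r hs
  rcases ht.eq_or_lt with rfl | ht
  · -- `hode` says nothing about `t < 0`, so at `t = 0` only the right derivative is known;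
    -- it vanishes, and then so does `deriv` (differentiable or not)
    have hzero := (hcomp.hasDerivWithinAt (s := Set.Ici 0)).congr heq (heq Set.self_mem_Ici)
    simp only [h0, tailPoly_zero, zero_div, zero_mul, sub_zero] at hzero ⊢
    exact deriv_eq_zero_of_hasDerivWithinAt_Ici hzero
  · exact (Filter.eventuallyEq_of_mem (Ici_mem_nhds ht) heq).deriv_eq.trans hcomp.deriv

lemma Herr_eq_s8 (Δ : ℕ) (r : ℕ → ℝ) {t : ℝ} (ht : 0 ≤ t) :
    Herr lam Δ r t = deriv lam t * Real.exp (-lam t) * herrProfile Δ r (lam t) := by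
  rw [Herr, deriv_LamErr hdiff h0 hode Δ r ht, LamErr_eq_of_nonneg hode Δ r ht,
    herrProfile, ← coeffPoly]
  ring

end ODE

/-- Pointwise bound on `H_r`: `|H_r(t)| ≤ 2 λ'(t) e^{-λ(t)} Σ_{k=0}^{Δ-1} λ(t)^k/k!`. -/
theorem Herr_pointwise_bound (Δ : ℕ) (hΔ : 3 ≤ Δ) (lam : ℝ → ℝ)
    (hdiff : Differentiable ℝ lam) (h0 : lam 0 = 0)
    (hode : ∀ t : ℝ, 0 ≤ t → deriv lam t = Real.exp (-lam t) * (1 + lam t))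
    (r : ℕ → ℝ) (hr : memR Δ r) :
    ∀ t : ℝ, 0 ≤ t →
      |Herr lam Δ r t| ≤ 2 * deriv lam t * Real.exp (-lam t) *
        ∑ k ∈ Finset.range Δ, lam t ^ k / (Nat.factorial k : ℝ) := by
  intro t ht
  have hlam := lam_nonneg_s8 hdiff h0 hode ht
  have hderiv : 0 < deriv lam t := by rw [hode t ht]; positivity
  rw [Herr_eq_s8 hdiff h0 hode Δ r ht, abs_mul, abs_of_pos (by positivity)]
  calc deriv lam t * Real.exp (-lam t) * |herrProfile Δ r (lam t)|
      ≤ deriv lam t * Real.exp (-lam t) * (2 * expTrunc Δ (lam t)) := by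
        gcongr; exact hr.abs_herrProfile_le hΔ hlam
    _ = _ := by rw [expTrunc]; ring
end
end
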